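/- Let γ ∈ SL(2,ℤ) and k ≥ 1 with det(1 - γ^k) ≠ 0. Let g_γ be the automorphism of Q_k(γ) = coker(1 - γ^k) induced by multiplication by γ (one has g_γ^k = id). Then k times the number of orbits of the cyclic group ⟨g_γ⟩ acting on Q_k(γ) equals ∑_{d ∣ k} φ(k/d) · |tr(γ^d) - 2|, where φ is Euler's totient function and the sum is over positive divisors d of k. -/

import Mathlib

/-!
Burnside's lemma for the cyclic group of order `k` acting through `g` gives
`k · #orbits = ∑_{j < k} #Fix(g^j)`, and `Fix(g^j) = Fix(g^gcd(k, j))` since `g^k = 1`;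
grouping `j` by `gcd(k, j) = d` yields `∑_{d ∣ k} φ(k/d) · #Fix(g^d)`.
Finally `#Fix(g^d) = |det(1 - γ^d)| = |tr(γ^d) - 2|` as `det γ^d = 1`.
-/

/-- `Q_k(γ) = coker(1 - γ^k)`, the cokernel of `1 - γ^k` acting on `Fin 2 → ℤ`. -/
abbrev Qk (γ : Matrix.SpecialLinearGroup (Fin 2) ℤ) (k : ℕ) :=
  (Fin 2 → ℤ) ⧸ LinearMap.range (Matrix.toLin'
    (1 - ((γ ^ k : Matrix.SpecialLinearGroup (Fin 2) ℤ) : Matrix (Fin 2) (Fin 2) ℤ)))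

open Function Matrix

theorem Nat.sum_range_apply_gcd_eq_sum_divisors {M : Type*} [AddCommMonoid M] (k : ℕ)
    (F : ℕ → M) :
    ∑ j ∈ Finset.range k, F (k.gcd j) = ∑ d ∈ k.divisors, (k / d).totient • F d := by
  rw [← Finset.sum_fiberwise_of_maps_to (g := k.gcd) (t := k.divisors)
    fun j hj => Nat.mem_divisors.mpr ⟨k.gcd_dvd_left j, (List.mem_range.mp hj).ne_zero⟩]
  refine Finset.sum_congr rfl fun d hd => ?_
  rw [Finset.sum_congr rfl fun j hj => congrArg F (Finset.mem_filter.mp hj).2, Finset.sum_const,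
    ← Nat.totient_div_of_dvd (Nat.dvd_of_mem_divisors hd)]

namespace Function

variable {X : Type*} {f : X → X} {k : ℕ}

theorem ptsOfPeriod_eq_ptsOfPeriod_gcd (hf : ∀ x, IsPeriodicPt f k x) (j : ℕ) :
    ptsOfPeriod f j = ptsOfPeriod f (k.gcd j) :=
  Set.ext fun x => ⟨(hf x).gcd, fun h => h.trans_dvd (k.gcd_dvd_right j)⟩

theorem mul_card_quot_iterate_eq_sum_card_ptsOfPeriod [Finite X]
    (hf : ∀ x, IsPeriodicPt f k x) :
    k * Nat.card (Quot fun x y : X => ∃ j, f^[j] x = y) =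
      ∑ j ∈ Finset.range k, Nat.card (ptsOfPeriod f j) := by
  rcases k.eq_zero_or_pos with rfl | hk
  · simp
  have : NeZero k := ⟨hk.ne'⟩
  let : AddAction (Fin k) X :=
    { vadd := fun a x => f^[a] x
      zero_vadd := fun _ => rfl
      add_vadd := fun a b x => by
        change f^[(a + b : Fin k)] x = f^[a] (f^[b] x)
        rw [Fin.val_add, (hf x).iterate_mod_apply, iterate_add_apply] }
  have horbit : ∀ x y, (∃ j, f^[j] x = y) ↔ AddAction.orbitRel (Fin k) X x y := by
    intro x y
    rw [Setoid.comm', AddAction.orbitRel_apply, AddAction.mem_orbit_iff]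
    refine ⟨fun ⟨j, hj⟩ => ⟨Fin.ofNat k j, ?_⟩, fun ⟨a, ha⟩ => ⟨(a : ℕ), ha⟩⟩
    change f^[Fin.ofNat k j] x = y
    rw [Fin.val_ofNat, (hf x).iterate_mod_apply, hj]
  have hburnside := Nat.card_congr (AddAction.sigmaFixedByEquivOrbitsProdAddGroup (Fin k) X)
  rw [Nat.card_sigma, Nat.card_prod, Nat.card_fin, mul_comm] at hburnside
  rw [Nat.card_congr (Quot.congr (Equiv.refl X) horbit)]
  exact hburnside.symm.trans (Fin.sum_univ_eq_sum_range (fun j => Nat.card (ptsOfPeriod f j)) k)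

theorem mul_card_quot_iterate_eq_sum_divisors [Finite X] (hf : ∀ x, IsPeriodicPt f k x) :
    k * Nat.card (Quot fun x y : X => ∃ j, f^[j] x = y) =
      ∑ d ∈ k.divisors, (k / d).totient * Nat.card (ptsOfPeriod f d) := by
  rw [mul_card_quot_iterate_eq_sum_card_ptsOfPeriod hf,
    Finset.sum_congr rfl fun j _ => congrArg Nat.card (congrArg Set.Elem
      (ptsOfPeriod_eq_ptsOfPeriod_gcd hf j)),
    Nat.sum_range_apply_gcd_eq_sum_divisors k fun d => Nat.card (ptsOfPeriod f d)]
  rfl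

end Function

theorem LinearMap.card_ker_eq_card_quotient_range {R M : Type*} [Ring R] [AddCommGroup M]
    [Module R M] [Finite M] (f : Module.End R M) :
    Nat.card (ker f) = Nat.card (M ⧸ range f) := by
  have hker := (ker f).card_eq_card_quotient_mul_card
  rw [Nat.card_congr f.quotKerEquivRange.toEquiv, (range f).card_eq_card_quotient_mul_card,
    mul_comm] at hker
  exact (Nat.eq_of_mul_eq_mul_right (Nat.card_pos (α := range f)) hker).symm

theorem Submodule.card_ker_mapQ_eq_card_quotient_range {R M : Type*} [Ring R] [AddCommGroup M]
    [Module R M] {p : Submodule R M} [Finite (M ⧸ p)] (f : Module.End R M)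
    (hf : p ≤ p.comap f) (hp : p ≤ LinearMap.range f) :
    Nat.card (LinearMap.ker (p.mapQ p f hf)) = Nat.card (M ⧸ LinearMap.range f) := by
  rw [LinearMap.card_ker_eq_card_quotient_range, range_mapQ,
    Nat.card_congr (quotientQuotientEquivQuotient p (LinearMap.range f) hp).toEquiv]

namespace Matrix

variable {ι : Type*} [Fintype ι] [DecidableEq ι]

theorem card_quotient_range_toLin' {A : Matrix ι ι ℤ} (hA : A.det ≠ 0) :
    Nat.card ((ι → ℤ) ⧸ LinearMap.range A.toLin') = A.det.natAbs := by
  let e := LinearEquiv.ofInjective A.toLin' (mulVec_injective_of_det_ne_zero hA)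
  have he : (LinearMap.range A.toLin').subtype ∘ₗ
      AddMonoidHom.toIntLinearMap (e : _ →+ LinearMap.range A.toLin') = A.toLin' :=
    LinearMap.ext fun _ => rfl
  rw [← (LinearMap.range A.toLin').natAbs_det_equiv e, he, LinearMap.det_toLin']

theorem finite_quotient_range_toLin' {A : Matrix ι ι ℤ} (hA : A.det ≠ 0) :
    Finite ((ι → ℤ) ⧸ LinearMap.range A.toLin') :=
  Nat.finite_of_card_ne_zero <| by
    rw [card_quotient_range_toLin' hA]
    exact Int.natAbs_ne_zero.mpr hA

section CokernelOneSubPow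

variable {A : Matrix ι ι ℤ} {k : ℕ}
  {g : Module.End ℤ ((ι → ℤ) ⧸ LinearMap.range (toLin' (1 - A ^ k)))}

theorem pow_apply_mk_of_apply_mk
    (hg : ∀ v, g (Submodule.Quotient.mk v) = Submodule.Quotient.mk (A *ᵥ v)) (j : ℕ)
    (v : ι → ℤ) : (g ^ j) (Submodule.Quotient.mk v) = Submodule.Quotient.mk (A ^ j *ᵥ v) := by
  induction j generalizing v with
  | zero => simp
  | succ j ih => rw [pow_succ, Module.End.mul_apply, hg, ih, mulVec_mulVec, ← pow_succ]

theorem isPeriodicPt_of_apply_mk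
    (hg : ∀ v, g (Submodule.Quotient.mk v) = Submodule.Quotient.mk (A *ᵥ v))
    (x : (ι → ℤ) ⧸ LinearMap.range (toLin' (1 - A ^ k))) : IsPeriodicPt g k x := by
  obtain ⟨v, rfl⟩ := Submodule.Quotient.mk_surjective _ x
  rw [IsPeriodicPt, IsFixedPt, ← Module.End.pow_apply, pow_apply_mk_of_apply_mk hg,
    Submodule.Quotient.eq]
  exact ⟨-v, by rw [toLin'_apply, mulVec_neg, sub_mulVec, one_mulVec, neg_sub]⟩

/-- The points of period `d` are the kernel of the map induced by `1 - A ^ d` on the finite group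
`coker (1 - A ^ k)`, so they are as many as its cokernel, which is `coker (1 - A ^ d)` because
`1 - A ^ d` divides `1 - A ^ k`. -/
theorem card_ptsOfPeriod_of_apply_mk
    (hg : ∀ v, g (Submodule.Quotient.mk v) = Submodule.Quotient.mk (A *ᵥ v))
    (hdet : (1 - A ^ k).det ≠ 0) {d : ℕ} (hd : d ∣ k) :
    Nat.card (ptsOfPeriod g d) = (1 - A ^ d).det.natAbs := by
  obtain ⟨m, rfl⟩ := hd
  have hfactor : 1 - A ^ (d * m) = (1 - A ^ d) * ∑ i ∈ Finset.range m, (A ^ d) ^ i := by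
    rw [mul_neg_geom_sum, pow_mul]
  have hdet_d : (1 - A ^ d).det ≠ 0 := fun h => hdet (by rw [hfactor, det_mul, h, zero_mul])
  have := finite_quotient_range_toLin' hdet
  have hcomm : Commute (1 - A ^ d) (1 - A ^ (d * m)) :=
    (Commute.one_left _).sub_left
      ((Commute.one_right _).sub_right (Commute.pow_pow_self A d (d * m)))
  have hpres : LinearMap.range (toLin' (1 - A ^ (d * m))) ≤
      (LinearMap.range (toLin' (1 - A ^ (d * m)))).comap (toLin' (1 - A ^ d)) := by
    rintro _ ⟨v, rfl⟩
    exact ⟨(1 - A ^ d) *ᵥ v, by simp only [toLin'_apply, mulVec_mulVec, hcomm.eq]⟩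
  have hle : LinearMap.range (toLin' (1 - A ^ (d * m))) ≤
      LinearMap.range (toLin' (1 - A ^ d)) := by
    rw [hfactor, toLin'_mul]
    exact LinearMap.range_comp_le_range _ _
  have hpts : ptsOfPeriod g d = LinearMap.ker (Submodule.mapQ _ _ _ hpres) := by
    ext x
    obtain ⟨v, rfl⟩ := Submodule.Quotient.mk_surjective _ x
    rw [mem_ptsOfPeriod, IsPeriodicPt, IsFixedPt, ← Module.End.pow_apply,
      pow_apply_mk_of_apply_mk hg, SetLike.mem_coe, LinearMap.mem_ker, Submodule.mapQ_apply,
      toLin'_apply, sub_mulVec, one_mulVec, Submodule.Quotient.mk_sub, sub_eq_zero, eq_comm]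
  rw [hpts, ← card_quotient_range_toLin' hdet_d]
  exact Submodule.card_ker_mapQ_eq_card_quotient_range _ hpres hle

end CokernelOneSubPow

theorem det_one_sub_fin_two {R : Type*} [CommRing R] (B : Matrix (Fin 2) (Fin 2) R) :
    (1 - B).det = 1 - B.trace + B.det := by
  simp only [det_fin_two, trace_fin_two, Matrix.sub_apply, one_apply_eq, one_apply_ne, ne_eq,
    zero_ne_one, one_ne_zero, not_false_eq_true]
  ring

theorem SpecialLinearGroup.natAbs_det_one_sub_fin_two (B : SpecialLinearGroup (Fin 2) ℤ) :
    (1 - (B : Matrix (Fin 2) (Fin 2) ℤ)).det.natAbs =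
      ((B : Matrix (Fin 2) (Fin 2) ℤ).trace - 2).natAbs := by
  rw [det_one_sub_fin_two, B.det_coe, ← Int.natAbs_neg]
  ring_nf

end Matrix

theorem stmt7_general (γ : Matrix.SpecialLinearGroup (Fin 2) ℤ) (k : ℕ)
    (hdet : (1 - ((γ ^ k : Matrix.SpecialLinearGroup (Fin 2) ℤ) :
        Matrix (Fin 2) (Fin 2) ℤ)).det ≠ 0)
    (g : Module.End ℤ (Qk γ k))
    (hg : ∀ v : Fin 2 → ℤ, g (Submodule.Quotient.mk v) =
      Submodule.Quotient.mk (Matrix.mulVec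
        ((γ : Matrix (Fin 2) (Fin 2) ℤ)) v)) :
    k * Nat.card (Quot fun x y : Qk γ k => ∃ j : ℕ, (g ^ j) x = y) =
      ∑ d ∈ Nat.divisors k, Nat.totient (k / d) *
        (Matrix.trace ((γ ^ d : Matrix.SpecialLinearGroup (Fin 2) ℤ) :
          Matrix (Fin 2) (Fin 2) ℤ) - 2).natAbs := by
  have := finite_quotient_range_toLin' hdet
  simp only [Module.End.pow_apply]
  refine (mul_card_quot_iterate_eq_sum_divisors (isPeriodicPt_of_apply_mk hg)).trans
    (Finset.sum_congr rfl fun d hd => ?_)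
  rw [card_ptsOfPeriod_of_apply_mk hg hdet (Nat.dvd_of_mem_divisors hd)]
  exact congrArg _ (SpecialLinearGroup.natAbs_det_one_sub_fin_two (γ ^ d))

/-- if `det(1 - γ^k) ≠ 0` and `g` is the endomorphism of `Q_k(γ)` induced by
multiplication by `γ`, then `k` times the number of orbits of `⟨g⟩` on `Q_k(γ)` equals
`∑_{d ∣ k} φ(k/d) · |tr(γ^d) - 2|`. -/
theorem stmt7 (γ : Matrix.SpecialLinearGroup (Fin 2) ℤ) (k : ℕ) (hk : 1 ≤ k)
    (hdet : (1 - ((γ ^ k : Matrix.SpecialLinearGroup (Fin 2) ℤ) :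
        Matrix (Fin 2) (Fin 2) ℤ)).det ≠ 0)
    (g : Module.End ℤ (Qk γ k))
    (hg : ∀ v : Fin 2 → ℤ, g (Submodule.Quotient.mk v) =
      Submodule.Quotient.mk (Matrix.mulVec
        ((γ : Matrix (Fin 2) (Fin 2) ℤ)) v)) :
    k * Nat.card (Quot fun x y : Qk γ k => ∃ j : ℕ, (g ^ j) x = y) =
      ∑ d ∈ Nat.divisors k, Nat.totient (k / d) *
        (Matrix.trace ((γ ^ d : Matrix.SpecialLinearGroup (Fin 2) ℤ) :
          Matrix (Fin 2) (Fin 2) ℤ) - 2).natAbs :=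
  stmt7_general γ k hdet g hg
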